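/- Let π be an infinite group with H¹(π; Zπ) = 0. Then the ring of Zπ-module endomorphisms of the augmentation ideal Iπ is isomorphic to Zπ, with x ∈ Zπ corresponding to the endomorphism b ↦ bx (right multiplication by x). -/

import Mathlib

/-!
An endomorphism `f` of `Iπ` is determined by its values on the generators `g - 1`, and
`g ↦ f (g - 1)` is a 1-cocycle of `π` with values in `ℤπ` because
`gh - 1 = g (h - 1) + (g - 1)`. When `H¹(π; ℤπ) = 0` it is a coboundary
`g ↦ g x - x = (g - 1) x`, i.e. `f` is right multiplication by `x`. Right multiplication by `x`
kills all `g - 1` only if `x` is invariant under left multiplication by `π`, which for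
infinite `π` forces `x = 0` since `x` has finite support.
-/

/-- The augmentation ring homomorphism `ℤπ → ℤ`. -/
noncomputable def aug (π : Type) [Group π] : MonoidAlgebra ℤ π →+* ℤ :=
  ((MonoidAlgebra.lift ℤ ℤ π) 1).toRingHom

/-- The augmentation ideal `Iπ = ker(ε : ℤπ → ℤ)`. -/
noncomputable def Ipi (π : Type) [Group π] : Ideal (MonoidAlgebra ℤ π) :=
  RingHom.ker (aug π)

/-- Right multiplication by `x ∈ ℤπ` as a `ℤπ`-linear endomorphism of `Iπ`. -/
noncomputable def rmulEnd (π : Type) [Group π] (x : MonoidAlgebra ℤ π) :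
    ↥(Ipi π) →ₗ[MonoidAlgebra ℤ π] ↥(Ipi π) where
  toFun b := ⟨(b : MonoidAlgebra ℤ π) * x, by
    have hb : aug π (b : MonoidAlgebra ℤ π) = 0 := b.2
    show (b : MonoidAlgebra ℤ π) * x ∈ RingHom.ker (aug π)
    rw [RingHom.mem_ker, map_mul, hb, zero_mul]⟩
  map_add' := by intro b b'; ext; simp [add_mul]
  map_smul' := by intro r b; ext; simp [smul_eq_mul, mul_assoc]

open MonoidAlgebra

theorem MonoidAlgebra.eq_zero_of_forall_single_one_mul_eq {k G : Type*} [Semiring k] [Group G]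
    [Infinite G] {z : k[G]} (h : ∀ g : G, single g 1 * z = z) : z = 0 := by
  by_contra hz
  obtain ⟨a, ha⟩ := Finsupp.support_nonempty_iff.2 (mt MonoidAlgebra.coeff_eq_zero.1 hz)
  have hmem (g : G) : g * a ∈ z.coeff.support := by
    have := congrArg (fun y : k[G] => y.coeff (g * a)) (h g)
    simp only [coeff_single_mul_apply, one_mul, inv_mul_cancel_left] at this
    rwa [Finsupp.mem_support_iff, ← this, ← Finsupp.mem_support_iff]
  exact Set.infinite_of_injective_forall_mem (mul_left_injective a) hmem
    z.coeff.support.finite_toSet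

theorem Representation.ofMulAction_self_apply {k G : Type*} [CommSemiring k] [Group G]
    (g : G) (v : k[G]) : Representation.ofMulAction k G G g v = single g 1 * v := by
  ext h
  rw [Representation.coeff_ofMulAction, coeff_single_mul_apply, one_mul, smul_eq_mul]

variable {π : Type} [Group π]

lemma aug_single (g : π) (r : ℤ) : aug π (single g r) = r := by
  simp [aug, lift_single]

lemma sum_coeff_smul_single_sub_one (b : ℤ[π]) :
    ∑ g ∈ b.coeff.support, b.coeff g • (single g 1 - 1 : ℤ[π]) = b - aug π b • 1 := by
  have hb : ∑ g ∈ b.coeff.support, b.coeff g • (single g 1 : ℤ[π]) = b := by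
    conv_rhs => rw [← sum_coeff_single b]
    simp [Finsupp.sum, smul_single]
  have haug : aug π b = ∑ g ∈ b.coeff.support, b.coeff g := by
    simp [aug, lift_apply, Finsupp.sum]
  simp only [smul_sub, Finset.sum_sub_distrib, ← Finset.sum_smul, hb, haug]

namespace Ipi

lemma single_sub_one_mem (g : π) : single g 1 - 1 ∈ Ipi π := by
  rw [Ipi, RingHom.mem_ker, map_sub, map_one, aug_single, sub_self]

noncomputable def subOne (g : π) : Ipi π := ⟨single g 1 - 1, single_sub_one_mem g⟩

lemma subOne_mul (g h : π) : subOne (g * h) = single g (1 : ℤ) • subOne h + subOne g := by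
  ext
  simp only [subOne, Submodule.coe_add, Submodule.coe_smul, smul_eq_mul, mul_sub,
    single_mul_single, mul_one]
  exact (sub_add_sub_cancel _ _ _).symm

lemma span_range_subOne : Submodule.span ℤ[π] (Set.range (subOne (π := π))) = ⊤ := by
  refine Submodule.eq_top_iff'.2 fun b => ?_
  have hb : ∑ g ∈ (b : ℤ[π]).coeff.support, (b : ℤ[π]).coeff g • subOne g = b := by
    have hb0 : aug π b = 0 := b.2
    apply Subtype.ext
    push_cast [subOne]
    rw [sum_coeff_smul_single_sub_one, hb0, zero_smul, sub_zero]
  rw [← hb]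
  exact Submodule.sum_mem _ fun g _ => zsmul_mem (Submodule.subset_span (Set.mem_range_self g)) _

theorem linearMap_ext {M : Type*} [AddCommMonoid M] [Module ℤ[π] M]
    {f f' : Ipi π →ₗ[ℤ[π]] M} (h : ∀ g, f (subOne g) = f' (subOne g)) : f = f' :=
  LinearMap.ext_on_range span_range_subOne h

end Ipi

open Ipi

lemma coe_rmulEnd_subOne (x : ℤ[π]) (g : π) :
    (rmulEnd π x (subOne g) : ℤ[π]) = (single g 1 - 1) * x := rfl

lemma rmulEnd_mul (x y : ℤ[π]) : rmulEnd π (x * y) = (rmulEnd π y).comp (rmulEnd π x) := by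
  refine LinearMap.ext fun b => Subtype.ext ?_
  exact (mul_assoc (b : ℤ[π]) x y).symm

theorem rmulEnd_injective [Infinite π] : Function.Injective (rmulEnd π) := by
  intro x y hxy
  rw [← sub_eq_zero]
  refine eq_zero_of_forall_single_one_mul_eq fun g => ?_
  have hg := congrArg (fun f => (f (subOne g) : ℤ[π])) hxy
  simp only [coe_rmulEnd_subOne] at hg
  rw [← sub_eq_zero, ← sub_one_mul, mul_sub, hg, sub_self]

lemma apply_subOne_mem_cocycles₁ (f : Ipi π →ₗ[ℤ[π]] Ipi π) :
    (fun g => (f (subOne g) : ℤ[π])) ∈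
      groupCohomology.cocycles₁ (Rep.of (Representation.ofMulAction ℤ π π)) := by
  refine (groupCohomology.mem_cocycles₁_iff _).2 fun g h => ?_
  rw [subOne_mul, map_add, map_smul, Submodule.coe_add, Submodule.coe_smul, smul_eq_mul]
  exact congrArg (· + _) (Representation.ofMulAction_self_apply g _).symm

theorem exists_rmulEnd_eq
    (hH1 : ∀ x y : groupCohomology (Rep.of (Representation.ofMulAction ℤ π π)) 1, x = y)
    (f : Ipi π →ₗ[ℤ[π]] Ipi π) : ∃ x, rmulEnd π x = f := by
  obtain ⟨x, hx⟩ :=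
    (groupCohomology.H1π_eq_zero_iff ⟨_, apply_subOne_mem_cocycles₁ f⟩).1 (hH1 _ _)
  refine ⟨x, linearMap_ext fun g => Subtype.ext ?_⟩
  have hg := congrFun hx g
  rw [groupCohomology.d₀₁_hom_apply] at hg
  rw [coe_rmulEnd_subOne, sub_one_mul, ← Representation.ofMulAction_self_apply]
  exact hg

/-- Let `π` be an infinite group with `H¹(π; ℤπ) = 0` (cohomology with coefficients
in the left regular representation).  Then the ring of `ℤπ`-module endomorphisms of
the augmentation ideal `Iπ` is isomorphic to `ℤπ`: the assignment
`x ↦ (b ↦ b·x)` is an additive bijection `ℤπ ≅ End_{ℤπ}(Iπ)` under which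
multiplication corresponds to composition (in the appropriate order). -/
theorem end_of_augmentation_ideal (π : Type) [Group π] [Infinite π]
    (hH1 : ∀ x y : groupCohomology (Rep.of (Representation.ofMulAction ℤ π π)) 1,
      x = y) :
    Function.Bijective (fun x : MonoidAlgebra ℤ π => rmulEnd π x)
    ∧ ∀ x y : MonoidAlgebra ℤ π, rmulEnd π (x * y) = (rmulEnd π y).comp (rmulEnd π x) :=
  ⟨⟨rmulEnd_injective, fun f => exists_rmulEnd_eq hH1 f⟩, rmulEnd_mul⟩
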